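/- For a stochastic operator T on L¹(X,μ): if f₁, f₂ are invariant densities, then T(f₁-f₂)⁺ = (f₁-f₂)⁺ and T(f₁-f₂)⁻ = (f₁-f₂)⁻. -/

import Mathlib

open MeasureTheory Real Set Filter

/-! Since `g := f₁ - f₂` is fixed and `T` is positive, `T g⁺ ≥ T g = g` and `T g⁺ ≥ 0`, so
`T g⁺ ≥ g⁺`. As `T` preserves integrals, `T g⁺ - g⁺` is a nonnegative function with zero
integral, hence `T g⁺ = g⁺`; then `T g⁻ = T (g⁺ - g) = g⁻`. -/

section LatticeOrderedGroup

variable {α F : Type*} [AddCommGroup α] [Lattice α] [IsOrderedAddMonoid α]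
  [FunLike F α α] [AddMonoidHomClass F α α]

theorem posPart_le_map_posPart_of_map_eq {T : F} (hT : ∀ f, 0 ≤ f → 0 ≤ T f) {g : α}
    (hg : T g = g) : g⁺ ≤ T g⁺ := by
  refine sup_le ?_ (hT _ (posPart_nonneg g))
  have := hT _ (sub_nonneg.mpr (le_posPart g))
  rwa [map_sub, hg, sub_nonneg] at this

theorem map_negPart_eq_of_map_posPart_eq {T : F} {g : α} (hg : T g = g) (hpos : T g⁺ = g⁺) :
    T g⁻ = g⁻ := by
  have hneg : g⁻ = g⁺ - g := by
    rw [eq_sub_iff_add_eq, ← eq_sub_iff_add_eq', posPart_sub_negPart]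
  rw [hneg, map_sub, hpos, hg]

end LatticeOrderedGroup

namespace MeasureTheory.Lp

variable {X : Type*} [MeasurableSpace X] {μ : Measure X} {p : ENNReal}

theorem posPart_eq_posPart (f : Lp ℝ p μ) : Lp.posPart f = f⁺ := by
  refine Lp.ext ?_
  filter_upwards [coeFn_posPart f, coeFn_sup f 0, coeFn_zero ℝ p μ] with x hpos hsup hzero
  rw [hpos, posPart_def, hsup, Pi.sup_apply, hzero]
  rfl

theorem negPart_eq_negPart (f : Lp ℝ p μ) : Lp.negPart f = f⁻ := by
  refine Lp.ext ?_
  filter_upwards [coeFn_negPart_eq_max f, coeFn_sup (-f) 0, coeFn_neg f, coeFn_zero ℝ p μ]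
    with x hneg hsup hf hzero
  rw [hneg, negPart_def, hsup, Pi.sup_apply, hzero, hf]
  rfl

theorem eq_of_le_of_integral_eq {f g : Lp ℝ 1 μ} (hfg : f ≤ g)
    (h : ∫ x, f x ∂μ = ∫ x, g x ∂μ) : f = g :=
  Lp.ext <| (integral_eq_iff_of_ae_le (L1.integrable_coeFn f) (L1.integrable_coeFn g)
    ((coeFn_le f g).mpr hfg)).mp h

end MeasureTheory.Lp

theorem stmt16_general {X : Type*} [MeasurableSpace X] (μ : Measure X)
    (T : Lp ℝ 1 μ →ₗ[ℝ] Lp ℝ 1 μ)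
    (hTpos : ∀ f : Lp ℝ 1 μ, 0 ≤ f → 0 ≤ T f)
    (hTint : ∀ f : Lp ℝ 1 μ, ∫ x, T f x ∂μ = ∫ x, f x ∂μ)
    (f₁ f₂ : Lp ℝ 1 μ)
    (hf₁ : T f₁ = f₁) (hf₂ : T f₂ = f₂) :
    T (Lp.posPart (f₁ - f₂)) = Lp.posPart (f₁ - f₂) ∧
    T (Lp.negPart (f₁ - f₂)) = Lp.negPart (f₁ - f₂) := by
  rw [Lp.posPart_eq_posPart, Lp.negPart_eq_negPart]
  have hg : T (f₁ - f₂) = f₁ - f₂ := by rw [map_sub, hf₁, hf₂]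
  have hpos : T (f₁ - f₂)⁺ = (f₁ - f₂)⁺ :=
    (Lp.eq_of_le_of_integral_eq (posPart_le_map_posPart_of_map_eq hTpos hg) (hTint _).symm).symm
  exact ⟨hpos, map_negPart_eq_of_map_posPart_eq hg hpos⟩

/-- for a stochastic operator T on L¹(X,μ), if f₁, f₂ are
invariant densities then T(f₁-f₂)⁺ = (f₁-f₂)⁺ and T(f₁-f₂)⁻ = (f₁-f₂)⁻. -/
theorem stmt16 {X : Type*} [MeasurableSpace X] (μ : Measure X) [SigmaFinite μ]
    (T : Lp ℝ 1 μ →ₗ[ℝ] Lp ℝ 1 μ)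
    (hTpos : ∀ f : Lp ℝ 1 μ, 0 ≤ f → 0 ≤ T f)
    (hTint : ∀ f : Lp ℝ 1 μ, ∫ x, T f x ∂μ = ∫ x, f x ∂μ)
    (f₁ f₂ : Lp ℝ 1 μ) (h₁ : 0 ≤ f₁) (h₂ : 0 ≤ f₂)
    (hi₁ : (∫ x, f₁ x ∂μ) = 1) (hi₂ : (∫ x, f₂ x ∂μ) = 1)
    (hf₁ : T f₁ = f₁) (hf₂ : T f₂ = f₂) :
    T (Lp.posPart (f₁ - f₂)) = Lp.posPart (f₁ - f₂) ∧
    T (Lp.negPart (f₁ - f₂)) = Lp.negPart (f₁ - f₂) :=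
  stmt16_general μ T hTpos hTint f₁ f₂ hf₁ hf₂
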